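/- arXiv:2307.11929 — 5 statements merged into one kernel-verified Lean document; each statement's English description precedes it below -/
import Mathlib

section
/- For integers n, p with 0 ≤ 2p ≤ n, the number of lattice paths from (0,0) to (n-p,p) using unit east and north steps that never cross above the diagonal y = x equals binomial(n,p) - binomial(n,p-1). -/
/-- Lattice walks from `(0,0)` to `(n-p,p)` with unit east/north steps never crossing
above the diagonal `y = x`, encoded as step sequences `f : Fin n → Bool`
(`true` = north, `false` = east) with `p` north steps and, in every prefix,
at most as many north steps as east steps. -/
def LatticeWalk (n p : ℕ) : Type :=
  {f : Fin n → Bool //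
    (Finset.univ.filter fun i => f i = true).card = p ∧
    ∀ k : Fin n,
      (Finset.univ.filter fun i : Fin n => i ≤ k ∧ f i = true).card ≤
      (Finset.univ.filter fun i : Fin n => i ≤ k ∧ f i = false).card}

/-!
Splitting off the last step, a walk with `n+1` steps, `p+1` of them north, is a walk with `n`
steps and `p` north steps followed by a north step (allowed only while `2p < n`), or a walk with
`n` steps and `p+1` north steps followed by an east step. While `2p < n` this is Pascal's
recursion, which the differences `C(n,p) - C(n,p-1)` satisfy as well. At the boundary
`n = 2p+1` there is no walk to `(p, p+1)`, matching `C(2p+1,p+1) = C(2p+1,p)`.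
-/

open Finset

namespace LatticeWalk

variable {n p : ℕ}

def stepCount (f : Fin n → Bool) (c : Bool) : ℕ := #{i | f i = c}

def prefixCount (f : Fin n → Bool) (c : Bool) (k : Fin n) : ℕ := #{i | i ≤ k ∧ f i = c}

def IsBallotSeq (p : ℕ) (f : Fin n → Bool) : Prop :=
  stepCount f true = p ∧ ∀ k, prefixCount f true k ≤ prefixCount f false k

theorem eq_subtype_isBallotSeq (n p : ℕ) :
    LatticeWalk n p = {f : Fin n → Bool // IsBallotSeq p f} := rfl

theorem stepCount_true_add_false (f : Fin n → Bool) :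
    stepCount f true + stepCount f false = n := by
  simpa [stepCount] using card_filter_add_card_filter_not (s := univ) (fun i => f i = true)

theorem stepCount_snoc (g : Fin n → Bool) (b c : Bool) :
    stepCount (Fin.snoc g b : Fin (n + 1) → Bool) c = stepCount g c + if b = c then 1 else 0 := by
  rw [stepCount, stepCount, card_filter, card_filter, Fin.sum_univ_castSucc]
  simp

theorem prefixCount_last (f : Fin (n + 1) → Bool) (c : Bool) :
    prefixCount f c (Fin.last n) = stepCount f c := by
  simp [prefixCount, stepCount, Fin.le_last]

theorem prefixCount_snoc_castSucc (g : Fin n → Bool) (b c : Bool) (k : Fin n) :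
    prefixCount (Fin.snoc g b : Fin (n + 1) → Bool) c k.castSucc = prefixCount g c k := by
  rw [prefixCount, prefixCount, card_filter, card_filter, Fin.sum_univ_castSucc]
  simp [(Fin.castSucc_lt_last k).not_ge]

theorem IsBallotSeq.two_mul_le {f : Fin n → Bool} (hf : IsBallotSeq p f) : 2 * p ≤ n := by
  obtain ⟨hp, hprefix⟩ := hf
  have := stepCount_true_add_false f
  cases n with
  | zero => omega
  | succ n =>
    have := hprefix (Fin.last n)
    rw [prefixCount_last, prefixCount_last] at this
    omega

theorem isBallotSeq_snoc_iff (g : Fin n → Bool) (b : Bool) :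
    IsBallotSeq p (Fin.snoc g b : Fin (n + 1) → Bool) ↔
      stepCount g true + (if b then 1 else 0) = p ∧
        (∀ k, prefixCount g true k ≤ prefixCount g false k) ∧ 2 * p ≤ n + 1 := by
  have htotal := stepCount_true_add_false g
  simp only [IsBallotSeq, Fin.forall_fin_succ', prefixCount_snoc_castSucc, prefixCount_last,
    stepCount_snoc]
  cases b <;> simp <;> omega

theorem isBallotSeq_snoc_false {g : Fin n → Bool} :
    IsBallotSeq p (Fin.snoc g false : Fin (n + 1) → Bool) ↔ IsBallotSeq p g := by
  rw [isBallotSeq_snoc_iff]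
  exact ⟨fun h => ⟨by simpa using h.1, h.2.1⟩, fun h => ⟨by simpa using h.1, h.2, by
    have := h.two_mul_le; omega⟩⟩

theorem isBallotSeq_succ_snoc_true {g : Fin n → Bool} :
    IsBallotSeq (p + 1) (Fin.snoc g true : Fin (n + 1) → Bool) ↔
      IsBallotSeq p g ∧ 2 * p < n := by
  rw [isBallotSeq_snoc_iff]
  exact ⟨fun h => ⟨⟨by simpa using h.1, h.2.1⟩, by omega⟩,
    fun h => ⟨by simpa using h.1.1, h.1.2, by omega⟩⟩

theorem isBallotSeq_zero_iff {f : Fin n → Bool} : IsBallotSeq 0 f ↔ f = fun _ => false := by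
  constructor
  · rintro ⟨h, -⟩
    simpa [stepCount, filter_eq_empty_iff, funext_iff] using h
  · rintro rfl
    simp [IsBallotSeq, stepCount, prefixCount]

end LatticeWalk

open LatticeWalk

theorem Nat.card_subtype_fin_succ {α : Type*} [Fintype α] {n : ℕ}
    (P : (Fin (n + 1) → α) → Prop) :
    Nat.card {f // P f} = ∑ a, Nat.card {g : Fin n → α // P (Fin.snoc g a)} := by
  rw [← Nat.card_sigma]
  exact Nat.card_congr ((Equiv.subtypeEquiv (Fin.snocEquiv fun _ => α) fun _ => Iff.rfl).symm.trans
    (Equiv.subtypeProdEquivSigmaSubtype fun a g => P (Fin.snoc g a)))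

theorem card_latticeWalk_zero (n : ℕ) : Nat.card (LatticeWalk n 0) = 1 := by
  rw [eq_subtype_isBallotSeq]
  simp_rw [isBallotSeq_zero_iff]
  exact Nat.card_unique

theorem card_latticeWalk_eq_zero {n p : ℕ} (h : n < 2 * p) : Nat.card (LatticeWalk n p) = 0 := by
  rw [eq_subtype_isBallotSeq, Nat.card_eq_zero]
  exact .inl ⟨fun f => by have := f.2.two_mul_le; omega⟩

theorem card_latticeWalk_succ_succ {n p : ℕ} (h : 2 * p < n) :
    Nat.card (LatticeWalk (n + 1) (p + 1)) =
      Nat.card (LatticeWalk n p) + Nat.card (LatticeWalk n (p + 1)) := by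
  simp only [eq_subtype_isBallotSeq, Nat.card_subtype_fin_succ, Fintype.sum_bool,
    isBallotSeq_succ_snoc_true, isBallotSeq_snoc_false, h, and_true]

theorem Nat.choose_succ_eq_ite (n k : ℕ) :
    (n + 1).choose k = (if k = 0 then 0 else n.choose (k - 1)) + n.choose k := by
  cases k <;> simp [Nat.choose_succ_succ']

theorem stmt0 (n p : ℕ) (hp : 2 * p ≤ n) :
    (Nat.card (LatticeWalk n p) : ℤ) =
      (n.choose p : ℤ) - (if p = 0 then 0 else (n.choose (p - 1) : ℤ)) := by
  induction n generalizing p with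
  | zero =>
    obtain rfl : p = 0 := by omega
    simp [card_latticeWalk_zero]
  | succ n ih =>
    cases p with
    | zero => simp [card_latticeWalk_zero]
    | succ p =>
      have hlast : (Nat.card (LatticeWalk n (p + 1)) : ℤ) = n.choose (p + 1) - n.choose p := by
        rcases (by omega : 2 * (p + 1) ≤ n ∨ n = 2 * p + 1) with h | rfl
        · simpa using ih (p + 1) h
        · simp [card_latticeWalk_eq_zero (by omega : 2 * p + 1 < 2 * (p + 1)),
            Nat.choose_symm_half]
      rw [card_latticeWalk_succ_succ (by omega), Nat.cast_add, ih p (by omega), hlast,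
        Nat.choose_succ_succ', Nat.choose_succ_eq_ite]
      push_cast
      ring
end

section
/- In the Temperley–Lieb algebra TL_n(δ) over a commutative ring, if a word w = e_{i_1} ⋯ e_{i_l} in the generators is reduced (of minimal length among all words equal to it up to a power of δ), then the maximal index m = max{i_1,…,i_l} occurs exactly once in the sequence (i_1,…,i_l). -/
/-- The defining relations of the Temperley–Lieb algebra `TL_n(δ)`:
`e_i² = δ e_i`, `e_i e_j e_i = e_i` for `|i-j| = 1`, and `e_i e_j = e_j e_i`
for `|i-j| > 1`.  Generators are indexed by `Fin m` with `m = n - 1`. -/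
inductive TLRel (k : Type*) [CommRing k] (δ : k) (m : ℕ) :
    FreeAlgebra k (Fin m) → FreeAlgebra k (Fin m) → Prop
  | sq (i : Fin m) :
      TLRel k δ m (FreeAlgebra.ι k i * FreeAlgebra.ι k i) (δ • FreeAlgebra.ι k i)
  | adj (i j : Fin m) (h : (i : ℕ) + 1 = j ∨ (j : ℕ) + 1 = i) :
      TLRel k δ m (FreeAlgebra.ι k i * FreeAlgebra.ι k j * FreeAlgebra.ι k i)
        (FreeAlgebra.ι k i)
  | comm (i j : Fin m) (h : (i : ℕ) + 1 < j ∨ (j : ℕ) + 1 < i) :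
      TLRel k δ m (FreeAlgebra.ι k i * FreeAlgebra.ι k j)
        (FreeAlgebra.ι k j * FreeAlgebra.ι k i)

/-- The Temperley–Lieb algebra `TL_n(δ)` over a commutative ring `k`. -/
abbrev TL (k : Type*) [CommRing k] (δ : k) (n : ℕ) : Type _ :=
  RingQuot (TLRel k δ (n - 1))

/-- The generator `e_i` of `TL_n(δ)` (here `i : Fin (n-1)` corresponds to `e_{i+1}`). -/
def TLgen (k : Type*) [CommRing k] (δ : k) (n : ℕ) (i : Fin (n - 1)) : TL k δ n :=
  RingQuot.mkAlgHom k (TLRel k δ (n - 1)) (FreeAlgebra.ι k i)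

/-- Evaluation of a word in the generators. -/
def TLword (k : Type*) [CommRing k] (δ : k) (n : ℕ) (l : List (Fin (n - 1))) : TL k δ n :=
  (l.map (TLgen k δ n)).prod

/-- A word is reduced if it has minimal length among all words equal to it
up to a factor which is a power of `δ`. -/
def TLreduced (k : Type*) [CommRing k] (δ : k) (n : ℕ) (l : List (Fin (n - 1))) : Prop :=
  ∀ l' : List (Fin (n - 1)),
    ((∃ m : ℕ, TLword k δ n l' = δ ^ m • TLword k δ n l) ∨
     (∃ m : ℕ, TLword k δ n l = δ ^ m • TLword k δ n l')) →
    l.length ≤ l'.length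

/-!
If `m` occurred twice, two consecutive occurrences would give a factor `e_m w e_m` with every
letter of `w` below `m`. Such a sandwich `e_i w e_i` is always `δ^p` times a shorter word, by
induction on `i`: if `e_{i-1}` does not occur in `w`, then `e_i` commutes past `w` and
`e_i² = δ e_i`; if it occurs once, `e_i e_{i-1} e_i = e_i`; if it occurs at least twice, two
consecutive occurrences of `e_{i-1}` form a smaller sandwich.
-/

namespace List

theorem exists_eq_append_cons_notMem_prefix {α : Type*} {l : List α} {x : α} (h : x ∈ l) :
    ∃ s t, l = s ++ x :: t ∧ x ∉ s := by
  induction l with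
  | nil => simp at h
  | cons y l ih =>
    by_cases hy : y = x
    · exact ⟨[], l, by rw [hy]; rfl, by simp⟩
    · obtain ⟨s, t, rfl, hs⟩ := ih (by simpa [Ne.symm hy] using h)
      exact ⟨y :: s, t, rfl, by simp [Ne.symm hy, hs]⟩

theorem exists_consecutive_occurrences_of_two_le_count {α : Type*} [BEq α] [LawfulBEq α]
    {l : List α} {x : α} (h : 2 ≤ l.count x) :
    ∃ a b c, l = a ++ x :: b ++ x :: c ∧ x ∉ b := by
  obtain ⟨a, t, rfl, ha⟩ :=
    exists_eq_append_cons_notMem_prefix (count_pos_iff.mp (show 0 < l.count x by omega))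
  have ht : x ∈ t := by
    rw [count_append, count_cons_self, count_eq_zero.mpr ha] at h
    exact count_pos_iff.mp (by omega)
  obtain ⟨b, c, rfl, hb⟩ := exists_eq_append_cons_notMem_prefix ht
  exact ⟨a, b, c, by simp, hb⟩

end List

section TemperleyLieb

variable {k : Type*} [CommRing k] (δ : k) (n : ℕ)

theorem TLword_append (l₁ l₂ : List (Fin (n - 1))) :
    TLword k δ n (l₁ ++ l₂) = TLword k δ n l₁ * TLword k δ n l₂ := by
  simp [TLword]

theorem TLword_cons (i : Fin (n - 1)) (l : List (Fin (n - 1))) :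
    TLword k δ n (i :: l) = TLgen k δ n i * TLword k δ n l := by
  simp [TLword]

theorem TLword_nil : TLword k δ n [] = 1 := rfl

theorem TLgen_mul_self (i : Fin (n - 1)) :
    TLgen k δ n i * TLgen k δ n i = δ • TLgen k δ n i := by
  simpa [TLgen] using RingQuot.mkAlgHom_rel k (TLRel.sq (δ := δ) i)

theorem TLgen_mul_TLgen_mul_TLgen_of_succ_eq (i j : Fin (n - 1)) (h : (j : ℕ) + 1 = i) :
    TLgen k δ n i * TLgen k δ n j * TLgen k δ n i = TLgen k δ n i := by
  simpa [TLgen] using RingQuot.mkAlgHom_rel k (TLRel.adj (δ := δ) i j (Or.inr h))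

theorem commute_TLgen_of_succ_lt {i j : Fin (n - 1)} (h : (j : ℕ) + 1 < i) :
    Commute (TLgen k δ n i) (TLgen k δ n j) := by
  simpa [TLgen, Commute, SemiconjBy] using
    RingQuot.mkAlgHom_rel k (TLRel.comm (δ := δ) i j (Or.inr h))

theorem commute_TLgen_TLword {i : Fin (n - 1)} {l : List (Fin (n - 1))}
    (hl : ∀ x ∈ l, (x : ℕ) + 1 < i) : Commute (TLgen k δ n i) (TLword k δ n l) :=
  Commute.list_prod_right _ _ fun _ hy => by
    obtain ⟨x, hx, rfl⟩ := List.mem_map.mp hy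
    exact commute_TLgen_of_succ_lt δ n (hl x hx)

def IsTLShortenable (l : List (Fin (n - 1))) : Prop :=
  ∃ (l' : List (Fin (n - 1))) (p : ℕ),
    TLword k δ n l = δ ^ p • TLword k δ n l' ∧ l'.length < l.length

theorem IsTLShortenable.append_append {w : List (Fin (n - 1))} (hw : IsTLShortenable δ n w)
    (a c : List (Fin (n - 1))) : IsTLShortenable δ n (a ++ w ++ c) := by
  obtain ⟨w', p, hw, hlen⟩ := hw
  refine ⟨a ++ w' ++ c, p, ?_, by simpa using hlen⟩
  simp only [TLword_append, hw, mul_smul_comm, smul_mul_assoc]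

theorem isTLShortenable_cons_append_singleton_of_forall_succ_lt {i : Fin (n - 1)}
    {b : List (Fin (n - 1))} (hb : ∀ x ∈ b, (x : ℕ) + 1 < i) :
    IsTLShortenable δ n (i :: b ++ [i]) := by
  refine ⟨b ++ [i], 1, ?_, by simp⟩
  calc TLword k δ n (i :: b ++ [i])
      = TLgen k δ n i * TLword k δ n b * TLgen k δ n i := by
        rw [List.cons_append, TLword_cons, TLword_append, TLword_cons, TLword_nil, mul_one,
          mul_assoc]
    _ = TLword k δ n b * (TLgen k δ n i * TLgen k δ n i) := by
        rw [(commute_TLgen_TLword δ n hb).eq, mul_assoc]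
    _ = δ ^ 1 • TLword k δ n (b ++ [i]) := by
        rw [TLgen_mul_self, mul_smul_comm, pow_one, TLword_append, TLword_cons, TLword_nil,
          mul_one]

theorem isTLShortenable_cons_append_cons_append_singleton_of_succ_eq {i j : Fin (n - 1)}
    (hj : (j : ℕ) + 1 = i) {b₁ b₂ : List (Fin (n - 1))} (hb₁ : ∀ x ∈ b₁, (x : ℕ) + 1 < i)
    (hb₂ : ∀ x ∈ b₂, (x : ℕ) + 1 < i) :
    IsTLShortenable δ n (i :: b₁ ++ j :: b₂ ++ [i]) := by
  refine ⟨b₁ ++ i :: b₂, 0, ?_, by simp⟩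
  calc TLword k δ n (i :: b₁ ++ j :: b₂ ++ [i])
      = TLgen k δ n i * TLword k δ n b₁ * TLgen k δ n j *
          (TLword k δ n b₂ * TLgen k δ n i) := by
        simp only [List.cons_append, TLword_cons, TLword_append, TLword_nil, mul_one, mul_assoc]
    _ = TLword k δ n b₁ * (TLgen k δ n i * TLgen k δ n j * TLgen k δ n i) *
          TLword k δ n b₂ := by
        rw [(commute_TLgen_TLword δ n hb₁).eq, ← (commute_TLgen_TLword δ n hb₂).eq]
        simp only [mul_assoc]
    _ = δ ^ 0 • TLword k δ n (b₁ ++ i :: b₂) := by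
        rw [TLgen_mul_TLgen_mul_TLgen_of_succ_eq δ n i j hj, pow_zero, one_smul, TLword_append,
          TLword_cons, mul_assoc]

theorem isTLShortenable_cons_append_singleton {i : Fin (n - 1)} {b : List (Fin (n - 1))}
    (hb : ∀ x ∈ b, x < i) : IsTLShortenable δ n (i :: b ++ [i]) := by
  induction i using WellFoundedLT.induction generalizing b with
  | _ i ih =>
  by_cases hpred : ∃ j ∈ b, (j : ℕ) + 1 = i
  swap
  · refine isTLShortenable_cons_append_singleton_of_forall_succ_lt δ n fun x hx => ?_
    have := Fin.lt_def.mp (hb x hx)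
    have : (x : ℕ) + 1 ≠ i := fun h => hpred ⟨x, hx, h⟩
    omega
  obtain ⟨j, hjb, hj⟩ := hpred
  have hfar : ∀ x ∈ b, x ≠ j → (x : ℕ) + 1 < i := fun x hx hxj => by
    have := Fin.lt_def.mp (hb x hx)
    have := Fin.val_ne_of_ne hxj
    omega
  rcases Nat.lt_or_ge (b.count j) 2 with hcount | hcount
  · obtain ⟨b₁, b₂, rfl, hb₁⟩ := List.exists_eq_append_cons_notMem_prefix hjb
    have hb₂ : j ∉ b₂ := by
      rw [List.count_append, List.count_cons_self, List.count_eq_zero.mpr hb₁] at hcount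
      exact List.count_eq_zero.mp (by omega)
    exact isTLShortenable_cons_append_cons_append_singleton_of_succ_eq δ n hj
      (fun x hx => hfar x (by simp [hx]) (ne_of_mem_of_not_mem hx hb₁))
      (fun x hx => hfar x (by simp [hx]) (ne_of_mem_of_not_mem hx hb₂))
  · obtain ⟨a, c, d, rfl, hc⟩ := List.exists_consecutive_occurrences_of_two_le_count hcount
    have hcj : ∀ x ∈ c, x < j := fun x hx => by
      have := hfar x (by simp [hx]) (ne_of_mem_of_not_mem hx hc)
      rw [Fin.lt_def]
      omega
    have hji : j < i := by rw [Fin.lt_def]; omega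
    simpa using (ih j hji hcj).append_append δ n (i :: a) (d ++ [i])

end TemperleyLieb

/-- Jones' Lemma: in a reduced word the maximal occurring index occurs exactly once. -/
theorem stmt3 (k : Type*) [CommRing k] (δ : k) (n : ℕ) (l : List (Fin (n - 1)))
    (hred : TLreduced k δ n l) (m : Fin (n - 1)) (hm : m ∈ l) (hmax : ∀ i ∈ l, i ≤ m) :
    l.count m = 1 := by
  by_contra hcount
  have htwo : 2 ≤ l.count m := by
    have := List.count_pos_iff.mpr hm
    omega
  obtain ⟨a, b, c, rfl, hb⟩ := List.exists_consecutive_occurrences_of_two_le_count htwo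
  have hbm : ∀ x ∈ b, x < m := fun x hx =>
    lt_of_le_of_ne (hmax x (by simp [hx])) (ne_of_mem_of_not_mem hx hb)
  obtain ⟨l', p, hword, hlen⟩ :=
    (isTLShortenable_cons_append_singleton δ n hbm).append_append δ n a c
  have hlist : a ++ (m :: b ++ [m]) ++ c = a ++ m :: b ++ m :: c := by simp
  rw [hlist] at hword hlen
  exact absurd (hred l' (Or.inr ⟨p, hword⟩)) (not_le.mpr hlen)
end

section
/- The set of words in Jones normal form in TL_n is in bijection with the set of Dyck paths from (0,0) to (n,n), hence has cardinality the n-th Catalan number (1/(n+1))·binomial(2n,n). -/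
/-- The data of a word in Jones normal form in `TL_n`: a number `r` of descending runs
and sequences `j, k` with `0 < j_1 < ⋯ < j_r < n`, `0 < k_1 < ⋯ < k_r < n` and
`k_i ≤ j_i` for all `i`. -/
def JonesNF (n : ℕ) : Type :=
  {x : Σ r : ℕ, (Fin r → ℕ) × (Fin r → ℕ) //
    StrictMono x.2.1 ∧ StrictMono x.2.2 ∧
    (∀ i, 0 < x.2.1 i ∧ x.2.1 i < n) ∧
    (∀ i, 0 < x.2.2 i ∧ x.2.2 i < n) ∧
    (∀ i, x.2.2 i ≤ x.2.1 i)}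

/-- Dyck paths from `(0,0)` to `(n,n)`: monotone lattice paths (`true` = north,
`false` = east) never crossing above the diagonal. -/
def DyckPath (n : ℕ) : Type :=
  {f : Fin (2 * n) → Bool //
    (Finset.univ.filter fun i => f i = true).card = n ∧
    ∀ k : Fin (2 * n),
      (Finset.univ.filter fun i : Fin (2 * n) => i ≤ k ∧ f i = true).card ≤
      (Finset.univ.filter fun i : Fin (2 * n) => i ≤ k ∧ f i = false).card}

/-!
Read a Dyck path as a lattice path below the diagonal and let `g i` be the height at which it
leaves column `i`; then `g` is monotone with `g i ≤ i`, and the path is recovered from `g`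
because its `i`-th east step is step number `i + g i`. Below the diagonal means exactly that
the `i`-th east step comes no later than step `2 i`.

The pairs `(j_i, k_i)` of a Jones normal form are the inner corners (a north step followed by
an east step) of such a path: `g m` is the largest `k_i` with `j_i ≤ m`, and conversely the
`j_i` are the columns where `g` climbs, the `k_i` the heights it climbs to.

Finally, Dyck paths are Dyck words (east = `U`, north = `D`), which are counted by the Catalan
numbers.
-/

open Finset DyckStep

lemma List.count_take_ofFn {α : Type*} [DecidableEq α] {m : ℕ} (v : Fin m → α) (a : α)
    (i : ℕ) :
    ((List.ofFn v).take i).count a = #{t : Fin m | (t : ℕ) < i ∧ v t = a} := by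
  induction m generalizing i with
  | zero => simp
  | succ m ih =>
    cases i with
    | zero => simp
    | succ i =>
      rw [List.ofFn_succ, List.take_succ_cons, List.count_cons, ih, Fin.card_filter_univ_succ']
      simp [add_comm]

lemma List.count_ofFn {α : Type*} [DecidableEq α] {m : ℕ} (v : Fin m → α) (a : α) :
    (List.ofFn v).count a = #{t | v t = a} := by
  simpa [List.take_of_length_le] using List.count_take_ofFn v a m

lemma StrictMono.add_sub_le_fin {m : ℕ} {e : Fin m → ℕ} (he : StrictMono e) {a b : Fin m}
    (hab : a ≤ b) : e a + (b - a) ≤ e b := by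
  have := card_le_card_of_injOn e (s := Icc a b) (t := Icc (e a) (e b))
    (fun x hx => by
      simp only [coe_Icc, Set.mem_Icc] at hx ⊢
      exact ⟨he.monotone hx.1, he.monotone hx.2⟩) he.injective.injOn
  simp only [Fin.card_Icc, Nat.card_Icc] at this
  omega

lemma Fin.card_filter_le_true_add_card_filter_le_false {m : ℕ} (f : Fin m → Bool) (k : Fin m) :
    #{t | t ≤ k ∧ f t = true} + #{t | t ≤ k ∧ f t = false} = k + 1 := by
  have := card_filter_add_card_filter_not (s := Iic k) (fun t => f t = true)
  rw [Fin.card_Iic] at this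
  convert this using 3 <;> ext <;> simp

lemma Fin.card_filter_false_add_card_filter_true {m : ℕ} (f : Fin m → Bool) :
    #{t | f t = false} + #{t | f t = true} = m := by
  simpa using card_filter_add_card_filter_not (s := univ) (fun t => f t = false)

namespace DyckPath

variable {n : ℕ} {f : Fin (2 * n) → Bool} {e : Fin n → Fin (2 * n)}

lemma card_prefix_false_eq (hf : ∀ t, f t = false ↔ t ∈ Set.range e) (he : e.Injective)
    (k : Fin (2 * n)) : #{t | t ≤ k ∧ f t = false} = #{i | e i ≤ k} := by
  rw [← card_image_of_injective _ he]
  congr 1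
  ext t
  simp only [mem_filter, mem_univ, true_and, mem_image, hf, Set.mem_range]
  constructor
  · rintro ⟨hk, i, rfl⟩
    exact ⟨i, hk, rfl⟩
  · rintro ⟨i, hk, rfl⟩
    exact ⟨hk, i, rfl⟩

lemma card_false_eq (hf : ∀ t, f t = false ↔ t ∈ Set.range e) (he : e.Injective) :
    #{t | f t = false} = n := by
  calc #{t | f t = false} = #(univ.image e) := by
        congr 1
        ext t
        simp [hf]
    _ = n := by rw [card_image_of_injective _ he, card_fin]

theorem dyck_iff_le_two_mul (hf : ∀ t, f t = false ↔ t ∈ Set.range e) (he : StrictMono e) :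
    (∀ k, #{t | t ≤ k ∧ f t = true} ≤ #{t | t ≤ k ∧ f t = false}) ↔
      ∀ i, (e i : ℕ) ≤ 2 * i := by
  have hprefix : ∀ k, #{t | t ≤ k ∧ f t = true} ≤ #{t | t ≤ k ∧ f t = false} ↔
      (k : ℕ) + 1 ≤ 2 * #{i | e i ≤ k} := fun k => by
    have := Fin.card_filter_le_true_add_card_filter_le_false f k
    rw [card_prefix_false_eq hf he.injective] at this ⊢
    omega
  simp only [hprefix]
  constructor
  -- Exactly `i` east steps come before step `e i`, and the first `k / 2 + 1` come by step `k`.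
  · intro h i
    rcases Nat.eq_zero_or_pos (e i : ℕ) with h0 | hpos
    · omega
    set k : Fin (2 * n) := ⟨e i - 1, by omega⟩
    have hcard : #{i' | e i' ≤ k} = i := by
      calc #{i' | e i' ≤ k} = #(Iio i) := by
            congr 1
            ext i'
            simp only [mem_filter, mem_univ, true_and, mem_Iio, ← he.lt_iff_lt, Fin.le_def,
              Fin.lt_def, k]
            omega
        _ = i := Fin.card_Iio i
    have := h k
    simp only [hcard, k] at this
    omega
  · intro h k
    have hsub : ({i | (i : ℕ) < k / 2 + 1} : Finset (Fin n)) ⊆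
        ({i | e i ≤ k} : Finset _) := by
      intro i
      simp only [mem_filter, mem_univ, true_and, Fin.le_def]
      have := h i
      omega
    have := card_le_card hsub
    rw [Fin.card_filter_val_lt] at this
    have := k.isLt
    omega

end DyckPath

structure Staircase (n : ℕ) where
  toFun : Fin n → ℕ
  monotone' : Monotone toFun
  apply_le' : ∀ i, toFun i ≤ i

namespace Staircase

variable {n : ℕ}

instance : CoeFun (Staircase n) fun _ => Fin n → ℕ := ⟨toFun⟩

lemma monotone (g : Staircase n) : Monotone g := g.monotone'

lemma apply_le (g : Staircase n) (i : Fin n) : g i ≤ i := g.apply_le' i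

@[ext]
lemma ext {g g' : Staircase n} (h : ∀ i, g i = g' i) : g = g' := by
  cases g
  cases g'
  congr
  exact funext h

def eastStep (g : Staircase n) (i : Fin n) : Fin (2 * n) :=
  ⟨i + g i, by have := g.apply_le i; omega⟩

lemma eastStep_strictMono (g : Staircase n) : StrictMono g.eastStep := fun a b hab => by
  have := g.monotone hab.le
  simp only [eastStep, Fin.lt_def] at hab ⊢
  omega

def isNorth (g : Staircase n) (t : Fin (2 * n)) : Bool := t ∉ univ.image g.eastStep

lemma isNorth_eq_false_iff (g : Staircase n) (t : Fin (2 * n)) :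
    g.isNorth t = false ↔ t ∈ Set.range g.eastStep := by
  simp [isNorth]

def toDyckPath (g : Staircase n) : DyckPath n :=
  ⟨g.isNorth, by
    have := Fin.card_filter_false_add_card_filter_true g.isNorth
    rw [DyckPath.card_false_eq g.isNorth_eq_false_iff g.eastStep_strictMono.injective] at this
    omega,
  (DyckPath.dyck_iff_le_two_mul g.isNorth_eq_false_iff g.eastStep_strictMono).2 fun i => by
    have := g.apply_le i
    simp only [eastStep]
    omega⟩

end Staircase

namespace DyckPath

variable {n : ℕ}

lemma card_false (p : DyckPath n) : #{t | p.1 t = false} = n := by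
  have := Fin.card_filter_false_add_card_filter_true p.1
  have := p.2.1
  omega

def eastStep (p : DyckPath n) : Fin n ↪o Fin (2 * n) :=
  ({t | p.1 t = false} : Finset _).orderEmbOfFin p.card_false

lemma eq_false_iff_mem_range_eastStep (p : DyckPath n) (t : Fin (2 * n)) :
    p.1 t = false ↔ t ∈ Set.range p.eastStep := by
  simp [eastStep, range_orderEmbOfFin]

lemma eastStep_le_two_mul (p : DyckPath n) (i : Fin n) : (p.eastStep i : ℕ) ≤ 2 * i :=
  (dyck_iff_le_two_mul p.eq_false_iff_mem_range_eastStep p.eastStep.strictMono).1 p.2.2 i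

lemma add_sub_le_eastStep (p : DyckPath n) {a b : Fin n} (hab : a ≤ b) :
    (p.eastStep a : ℕ) + (b - a) ≤ p.eastStep b :=
  (Fin.val_strictMono.comp p.eastStep.strictMono).add_sub_le_fin hab

lemma le_eastStep (p : DyckPath n) (i : Fin n) : (i : ℕ) ≤ p.eastStep i := by
  have := p.add_sub_le_eastStep (show (⟨0, i.pos⟩ : Fin n) ≤ i from Nat.zero_le _)
  simp only [Nat.sub_zero] at this
  omega

def toStaircase (p : DyckPath n) : Staircase n :=
  ⟨fun i => p.eastStep i - i,
    fun a b hab => by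
      have := p.add_sub_le_eastStep hab
      show (p.eastStep a : ℕ) - a ≤ p.eastStep b - b
      omega,
    fun i => by
      have := p.eastStep_le_two_mul i
      show (p.eastStep i : ℕ) - i ≤ i
      omega⟩

lemma toStaircase_eastStep (p : DyckPath n) : p.toStaircase.eastStep = p.eastStep := by
  funext i
  ext
  have := p.le_eastStep i
  simp only [Staircase.eastStep, toStaircase]
  omega

end DyckPath

namespace Staircase

variable {n : ℕ}

lemma eastStep_toDyckPath (g : Staircase n) : ⇑g.toDyckPath.eastStep = g.eastStep :=
  (orderEmbOfFin_unique _ (fun i => by simp [toDyckPath, isNorth_eq_false_iff])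
    g.eastStep_strictMono).symm

lemma toStaircase_toDyckPath (g : Staircase n) : g.toDyckPath.toStaircase = g := by
  ext i
  simp [DyckPath.toStaircase, eastStep_toDyckPath, eastStep]

lemma _root_.DyckPath.toDyckPath_toStaircase (p : DyckPath n) : p.toStaircase.toDyckPath = p := by
  apply Subtype.ext
  funext t
  have h := p.toStaircase.isNorth_eq_false_iff t
  rw [DyckPath.toStaircase_eastStep, ← p.eq_false_iff_mem_range_eastStep] at h
  change p.toStaircase.isNorth t = p.1 t
  exact Bool.eq_iff_iff.2 (by simpa using not_congr h)

def equivDyckPath (n : ℕ) : Staircase n ≃ DyckPath n :=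
  ⟨toDyckPath, DyckPath.toStaircase, toStaircase_toDyckPath, DyckPath.toDyckPath_toStaircase⟩

end Staircase

namespace JonesNF

variable {n : ℕ}

def len (x : JonesNF n) : ℕ := x.1.1

def j (x : JonesNF n) : Fin x.len → ℕ := x.1.2.1

def k (x : JonesNF n) : Fin x.len → ℕ := x.1.2.2

lemma j_strictMono (x : JonesNF n) : StrictMono x.j := x.2.1

lemma k_strictMono (x : JonesNF n) : StrictMono x.k := x.2.2.1

lemma j_lt (x : JonesNF n) (i : Fin x.len) : x.j i < n := (x.2.2.2.1 i).2

lemma k_pos (x : JonesNF n) (i : Fin x.len) : 0 < x.k i := (x.2.2.2.2.1 i).1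

lemma k_le_j (x : JonesNF n) (i : Fin x.len) : x.k i ≤ x.j i := x.2.2.2.2.2 i

lemma ext_of_range_j {x y : JonesNF n} (hj : Set.range x.j = Set.range y.j)
    (hk : ∀ i i', x.j i = y.j i' → x.k i = y.k i') : x = y := by
  obtain ⟨⟨r, j, k⟩, hx⟩ := x
  obtain ⟨⟨r', j', k'⟩, hy⟩ := y
  change Set.range j = Set.range j' at hj
  obtain rfl : r = r' := by
    simpa [Set.ncard_range_of_injective hx.1.injective,
      Set.ncard_range_of_injective hy.1.injective] using congrArg Set.ncard hj
  obtain rfl : j = j' := (hx.1.range_inj hy.1).1 hj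
  obtain rfl : k = k' := funext fun i => hk i i rfl
  rfl

def toStaircase (x : JonesNF n) : Staircase n :=
  ⟨fun m => ({i | x.j i ≤ m} : Finset _).sup x.k,
    fun _ _ h => Finset.sup_mono (monotone_filter_right _ fun _ _ hi => hi.trans h),
    fun _ => Finset.sup_le fun i hi => (x.k_le_j i).trans (mem_filter.1 hi).2⟩

lemma toStaircase_apply (x : JonesNF n) (m : Fin n) :
    x.toStaircase m = ({i | x.j i ≤ m} : Finset _).sup x.k := rfl

lemma toStaircase_j (x : JonesNF n) (i : Fin x.len) :
    x.toStaircase ⟨x.j i, x.j_lt i⟩ = x.k i := by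
  rw [toStaircase_apply]
  refine le_antisymm (Finset.sup_le fun i' hi' => ?_) (Finset.le_sup (f := x.k) (by simp))
  exact x.k_strictMono.monotone (x.j_strictMono.le_iff_le.1 (mem_filter.1 hi').2)

lemma toStaircase_lt {x : JonesNF n} {i : Fin x.len} {m : Fin n} (hm : (m : ℕ) < x.j i) :
    x.toStaircase m < x.k i := by
  rw [toStaircase_apply, Finset.sup_lt_iff (x.k_pos i)]
  intro i' hi'
  exact x.k_strictMono (x.j_strictMono.lt_iff_lt.1 ((mem_filter.1 hi').2.trans_lt hm))

end JonesNF

namespace Staircase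

variable {n : ℕ}

def jumps (g : Staircase n) : Finset (Fin n) := {b | 0 < g b ∧ ∀ a < b, g a < g b}

lemma mem_jumps {g : Staircase n} {b : Fin n} :
    b ∈ g.jumps ↔ 0 < g b ∧ ∀ a < b, g a < g b := by
  simp [jumps]

lemma exists_mem_jumps (g : Staircase n) {m : Fin n} (hm : 0 < g m) :
    ∃ b ∈ g.jumps, b ≤ m ∧ g b = g m := by
  set b := ({a | g a = g m} : Finset (Fin n)).min' ⟨m, by simp⟩
  have hb : g b = g m := (mem_filter.1 (min'_mem ({a | g a = g m} : Finset (Fin n)) _)).2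
  refine ⟨b, mem_jumps.2 ⟨hb ▸ hm, fun a ha => ?_⟩, min'_le _ _ (by simp), hb⟩
  refine (g.monotone ha.le).lt_of_ne fun h => ?_
  exact (min'_le _ a (by simp [h, hb])).not_gt ha

lemma pos_of_mem_jumps {g : Staircase n} {b : Fin n} (hb : b ∈ g.jumps) : 0 < g b :=
  (mem_jumps.1 hb).1

def toJonesNF (g : Staircase n) : JonesNF n :=
  ⟨⟨#g.jumps, fun i => g.jumps.orderEmbOfFin rfl i, fun i => g (g.jumps.orderEmbOfFin rfl i)⟩,
    Fin.val_strictMono.comp (orderEmbOfFin _ rfl).strictMono,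
    fun _ b hab =>
      (mem_jumps.1 (orderEmbOfFin_mem _ rfl b)).2 _ ((orderEmbOfFin _ rfl).strictMono hab),
    fun i => ⟨(pos_of_mem_jumps (orderEmbOfFin_mem g.jumps rfl i)).trans_le (g.apply_le _),
      Fin.is_lt _⟩,
    fun i => ⟨pos_of_mem_jumps (orderEmbOfFin_mem g.jumps rfl i),
      (g.apply_le _).trans_lt (Fin.is_lt _)⟩,
    fun _ => g.apply_le _⟩

lemma toStaircase_toJonesNF (g : Staircase n) : g.toJonesNF.toStaircase = g := by
  ext m
  rw [JonesNF.toStaircase_apply]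
  refine le_antisymm (Finset.sup_le fun i hi => g.monotone (mem_filter.1 hi).2) ?_
  rcases (g m).eq_zero_or_pos with h0 | hpos
  · simp [h0]
  obtain ⟨b, hb, hbm, hgb⟩ := g.exists_mem_jumps hpos
  obtain ⟨i, rfl⟩ : b ∈ Set.range (g.jumps.orderEmbOfFin rfl) := by
    simpa [range_orderEmbOfFin] using hb
  rw [← hgb]
  exact Finset.le_sup (f := g.toJonesNF.k) (mem_filter.2 ⟨mem_univ _, hbm⟩)

end Staircase

namespace JonesNF

variable {n : ℕ}

lemma mem_jumps_toStaircase {x : JonesNF n} {b : Fin n} :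
    b ∈ x.toStaircase.jumps ↔ (b : ℕ) ∈ Set.range x.j := by
  rw [Staircase.mem_jumps]
  constructor
  · rintro ⟨hpos, hlt⟩
    rw [toStaircase_apply] at hpos
    have hne : ({i | x.j i ≤ b} : Finset _).Nonempty := by
      by_contra h
      simp [not_nonempty_iff_eq_empty.1 h] at hpos
    obtain ⟨i, hi, hsup⟩ := exists_mem_eq_sup _ hne x.k
    refine ⟨i, (mem_filter.1 hi).2.eq_of_not_lt fun hib => ?_⟩
    have := hlt ⟨x.j i, x.j_lt i⟩ hib
    rw [toStaircase_j, toStaircase_apply, hsup] at this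
    exact this.false
  · rintro ⟨i, hi⟩
    obtain rfl : b = ⟨x.j i, x.j_lt i⟩ := Fin.ext hi.symm
    rw [toStaircase_j]
    exact ⟨x.k_pos i, fun a ha => toStaircase_lt ha⟩

lemma toJonesNF_toStaircase (x : JonesNF n) : x.toStaircase.toJonesNF = x := by
  set J := x.toStaircase.jumps.orderEmbOfFin rfl
  refine ext_of_range_j (Set.ext fun m => ⟨?_, ?_⟩) fun i i' h => ?_
  · rintro ⟨i, rfl⟩
    exact mem_jumps_toStaircase.1 (orderEmbOfFin_mem x.toStaircase.jumps rfl i)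
  · rintro ⟨i, rfl⟩
    obtain ⟨i', hi'⟩ : (⟨x.j i, x.j_lt i⟩ : Fin n) ∈ Set.range J := by
      rw [range_orderEmbOfFin, mem_coe, mem_jumps_toStaircase]
      exact ⟨i, rfl⟩
    exact ⟨i', congrArg Fin.val hi'⟩
  · have hJ : J i = ⟨x.j i', x.j_lt i'⟩ := Fin.ext h
    change x.toStaircase (J i) = x.k i'
    rw [hJ, toStaircase_j]

def equivStaircase (n : ℕ) : JonesNF n ≃ Staircase n :=
  ⟨toStaircase, Staircase.toJonesNF, toJonesNF_toStaircase, Staircase.toStaircase_toJonesNF⟩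

end JonesNF

lemma DyckWord.ofFn_getElem?_eq_D {n : ℕ} (w : DyckWord) (hw : w.semilength = n) :
    List.ofFn (fun t : Fin (2 * n) => if w.toList[(t : ℕ)]? = some D then D else U) =
      w.toList := by
  apply List.ext_getElem (by simp [← w.two_mul_semilength_eq_length, hw])
  intro i _ hi
  rcases (w.toList[i]'hi).dichotomy with h | h <;> simp [List.getElem?_eq_getElem hi, h]

namespace DyckPath

variable {n : ℕ}

lemma card_true_lt_le_card_false_lt (p : DyckPath n) (i : ℕ) :
    #{t : Fin (2 * n) | (t : ℕ) < i ∧ p.1 t = true} ≤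
      #{t : Fin (2 * n) | (t : ℕ) < i ∧ p.1 t = false} := by
  rcases i with _ | i
  · simp
  by_cases hi : i < 2 * n
  · simpa [Nat.lt_succ_iff, Fin.le_def] using p.2.2 ⟨i, hi⟩
  · have hall : ∀ t : Fin (2 * n), (t : ℕ) < i + 1 := fun t => by omega
    simp [hall, p.2.1, p.card_false]

def toDyckWord (p : DyckPath n) : DyckWord where
  toList := List.ofFn fun t => if p.1 t then D else U
  count_U_eq_count_D := by simp [List.count_ofFn, p.2.1, p.card_false]
  count_D_le_count_U i := by simpa [List.count_take_ofFn] using p.card_true_lt_le_card_false_lt i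

lemma semilength_toDyckWord (p : DyckPath n) : p.toDyckWord.semilength = n := by
  simp [DyckWord.semilength, toDyckWord, List.count_ofFn, p.card_false]

def ofDyckWord (w : DyckWord) (hw : w.semilength = n) : DyckPath n :=
  ⟨fun t => w.toList[(t : ℕ)]? = some D, by
    have := w.semilength_eq_count_D
    rw [← w.ofFn_getElem?_eq_D hw, List.count_ofFn] at this
    simp only [ite_eq_left_iff, reduceCtorEq, imp_false, not_not, hw] at this
    simp [this], fun k => by
    have := w.count_D_le_count_U (k + 1)
    rw [← w.ofFn_getElem?_eq_D hw, List.count_take_ofFn, List.count_take_ofFn] at this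
    simp only [ite_eq_left_iff, ite_eq_right_iff, reduceCtorEq, imp_false, not_not,
      Nat.lt_add_one_iff] at this
    simpa only [decide_eq_true_eq, decide_eq_false_iff_not, Fin.le_iff_val_le_val]⟩

def equivDyckWord (n : ℕ) : DyckPath n ≃ {w : DyckWord // w.semilength = n} where
  toFun p := ⟨p.toDyckWord, p.semilength_toDyckWord⟩
  invFun w := ofDyckWord w.1 w.2
  left_inv p := by
    apply Subtype.ext
    funext t
    cases h : p.1 t <;> simp [ofDyckWord, toDyckWord, h]
  right_inv w := Subtype.ext <| DyckWord.ext <| by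
    simpa [ofDyckWord, toDyckWord] using w.1.ofFn_getElem?_eq_D w.2

end DyckPath

theorem stmt6 (n : ℕ) :
    Nonempty (JonesNF n ≃ DyckPath n) ∧
    Nat.card (JonesNF n) = (2 * n).choose n / (n + 1) := by
  let e : JonesNF n ≃ DyckPath n := (JonesNF.equivStaircase n).trans (Staircase.equivDyckPath n)
  refine ⟨⟨e⟩, ?_⟩
  rw [Nat.card_congr (e.trans (DyckPath.equivDyckWord n)), Nat.card_eq_fintype_card,
    DyckWord.card_dyckWord_semilength_eq_catalan, catalan_eq_centralBinom_div, Nat.centralBinom]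
end

section
/- A permutation w of {1,…,n} is 321-avoiding (has no indices i < j < k with w(i) > w(j) > w(k)) if and only if w is fully commutative, i.e. any two reduced expressions of w in the Coxeter generators s_1,…,s_{n-1} are related by a sequence of commutations s_i s_j = s_j s_i with |i-j| > 1. -/
/-- The Coxeter generator `s_i = (i, i+1)` of the symmetric group on `Fin n`. -/
def cox (n : ℕ) (i : Fin (n - 1)) : Equiv.Perm (Fin n) :=
  Equiv.swap ⟨(i : ℕ), lt_of_lt_of_le i.isLt (Nat.sub_le n 1)⟩
    ⟨(i : ℕ) + 1, by have := i.isLt; omega⟩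

/-- Evaluation of a word in the Coxeter generators. -/
def wordProd (n : ℕ) (l : List (Fin (n - 1))) : Equiv.Perm (Fin n) :=
  (l.map (cox n)).prod

/-- A reduced expression of `w`: a word of minimal length with product `w`. -/
def IsReducedWord (n : ℕ) (w : Equiv.Perm (Fin n)) (l : List (Fin (n - 1))) : Prop :=
  wordProd n l = w ∧ ∀ l' : List (Fin (n - 1)), wordProd n l' = w → l.length ≤ l'.length

/-- A single commutation move `… s_i s_j … ↦ … s_j s_i …` with `|i - j| > 1`. -/
def CommMove (n : ℕ) (l l' : List (Fin (n - 1))) : Prop :=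
  ∃ (a b : List (Fin (n - 1))) (i j : Fin (n - 1)),
    ((i : ℕ) + 1 < j ∨ (j : ℕ) + 1 < i) ∧
    l = a ++ i :: j :: b ∧ l' = a ++ j :: i :: b

/-- `w` is fully commutative: any two reduced expressions of `w` are related by a
sequence of commutation moves. -/
def FullyCommutative (n : ℕ) (w : Equiv.Perm (Fin n)) : Prop :=
  ∀ l l' : List (Fin (n - 1)), IsReducedWord n w l → IsReducedWord n w l' →
    Relation.ReflTransGen (CommMove n) l l'

/-- `w` is 321-avoiding. -/
def Avoids321 (n : ℕ) (w : Equiv.Perm (Fin n)) : Prop :=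
  ¬ ∃ i j k : Fin n, i < j ∧ j < k ∧ w k < w j ∧ w j < w i

/-!
The length of `w` in the generators `s_i` is its number of inversions, and `s_i w` is shorter
than `w` exactly when `i + 1` precedes `i` in `w` (a left descent). In a 321-avoiding `w` no two
adjacent generators are left descents, and removing a left descent keeps `w` 321-avoiding. So two
reduced words beginning with different letters `s_i`, `s_j` have `|i - j| > 1`, and by induction
on the length they are connected through reduced words `s_i s_j u` and `s_j s_i u`.

Conversely, commutation moves only permute the letters of a word. If `w` contains a 321 pattern,
strip left descents as long as a pattern survives; when it no longer can, the pattern forces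
`s_d` and `s_{d+1}` to be left descents, and then `s_d s_{d+1} s_d u` and `s_{d+1} s_d s_{d+1} u`
are reduced words of `w` using `s_d` a different number of times.
-/

open Equiv Finset Relation

section Generators

variable {n : ℕ}

def coxLo (i : Fin (n - 1)) : Fin n := ⟨i, lt_of_lt_of_le i.isLt (Nat.sub_le n 1)⟩

def coxHi (i : Fin (n - 1)) : Fin n := ⟨i + 1, by have := i.isLt; omega⟩

theorem cox_eq_swap (i : Fin (n - 1)) : cox n i = swap (coxLo i) (coxHi i) := rfl

@[simp] theorem val_coxLo (i : Fin (n - 1)) : (coxLo i : ℕ) = i := rfl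

@[simp] theorem val_coxHi (i : Fin (n - 1)) : (coxHi i : ℕ) = i + 1 := rfl

theorem coxLo_lt_coxHi (i : Fin (n - 1)) : coxLo i < coxHi i := by
  simp [Fin.lt_def]

@[simp] theorem cox_apply_coxLo (i : Fin (n - 1)) : cox n i (coxLo i) = coxHi i :=
  swap_apply_left _ _

@[simp] theorem cox_apply_coxHi (i : Fin (n - 1)) : cox n i (coxHi i) = coxLo i :=
  swap_apply_right _ _

theorem val_cox_apply (i : Fin (n - 1)) (x : Fin n) :
    (cox n i x : ℕ) =
      if (x : ℕ) = i then (i : ℕ) + 1 else if (x : ℕ) = (i : ℕ) + 1 then (i : ℕ) else (x : ℕ) := by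
  rw [cox_eq_swap, swap_apply_def]
  split_ifs <;> simp_all [Fin.ext_iff]

theorem cox_apply_of_ne {i : Fin (n - 1)} {x : Fin n} (h₁ : (x : ℕ) ≠ i) (h₂ : (x : ℕ) ≠ i + 1) :
    cox n i x = x :=
  swap_apply_of_ne_of_ne (by simpa [Fin.ext_iff] using h₁) (by simpa [Fin.ext_iff] using h₂)

@[simp] theorem cox_inv (i : Fin (n - 1)) : (cox n i)⁻¹ = cox n i :=
  swap_inv _ _

@[simp] theorem cox_mul_cox_mul (i : Fin (n - 1)) (g : Perm (Fin n)) :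
    cox n i * (cox n i * g) = g := by
  rw [← mul_assoc, cox_eq_swap, swap_mul_self, one_mul]

theorem cox_mul_eq_iff {i : Fin (n - 1)} {g h : Perm (Fin n)} :
    cox n i * g = h ↔ g = cox n i * h := by
  constructor <;> rintro rfl <;> simp

theorem cox_apply_lt_cox_apply_iff {i : Fin (n - 1)} {x y : Fin n}
    (h₁ : ¬(x = coxLo i ∧ y = coxHi i)) (h₂ : ¬(x = coxHi i ∧ y = coxLo i)) :
    cox n i x < cox n i y ↔ x < y := by
  simp only [Fin.lt_def, val_cox_apply, Fin.ext_iff, val_coxLo, val_coxHi] at *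
  split_ifs <;> omega

theorem cox_mul_comm {i j : Fin (n - 1)} (h : (i : ℕ) + 1 < j ∨ (j : ℕ) + 1 < i) :
    cox n i * cox n j = cox n j * cox n i := by
  ext x
  simp only [Perm.mul_apply, val_cox_apply]
  split_ifs <;> omega

theorem cox_braid {i j : Fin (n - 1)} (h : (i : ℕ) + 1 = j) :
    cox n i * cox n j * cox n i = cox n j * cox n i * cox n j := by
  have hij : coxHi i = coxLo j := Fin.ext (by simp [h])
  rw [cox_eq_swap, cox_eq_swap, hij,
    swap_mul_swap_mul_swap (x := coxLo i) (y := coxLo j) (z := coxHi j)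
      (Fin.ne_of_val_ne (by simp only [val_coxLo]; omega))
      (Fin.ne_of_val_ne (by simp only [val_coxLo, val_coxHi]; omega)),
    swap_comm (coxLo i) (coxLo j), swap_comm (coxLo j) (coxHi j),
    swap_mul_swap_mul_swap (x := coxHi j) (y := coxLo j) (z := coxLo i)
      (Fin.ne_of_val_ne (by simp only [val_coxLo, val_coxHi]; omega))
      (Fin.ne_of_val_ne (by simp only [val_coxLo, val_coxHi]; omega)), swap_comm]

@[simp] theorem wordProd_nil : wordProd n [] = 1 := rfl

@[simp] theorem wordProd_cons (i : Fin (n - 1)) (l : List (Fin (n - 1))) :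
    wordProd n (i :: l) = cox n i * wordProd n l :=
  List.prod_cons

end Generators

theorem Finset.card_filter_eq_card_filter_add_one {α : Type*} [DecidableEq α] {s : Finset α}
    {p q : α → Prop} [DecidablePred p] [DecidablePred q] {a : α} (ha : a ∈ s) (hp : p a) (hq : ¬q a)
    (h : ∀ b ∈ s, b ≠ a → (p b ↔ q b)) : #(s.filter p) = #(s.filter q) + 1 := by
  rw [← card_insert_of_notMem (by simp [hq] : a ∉ s.filter q)]
  congr 1
  ext b
  by_cases hb : b = a
  · simp [hb, ha, hp]
  · simp +contextual [hb, h]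

section Inversions

variable {n : ℕ}

def Equiv.Perm.invCount (w : Perm (Fin n)) : ℕ :=
  #(univ.filter fun p : Fin n × Fin n => p.1 < p.2 ∧ w p.2 < w p.1)

def IsLeftDescent (i : Fin (n - 1)) (w : Perm (Fin n)) : Prop :=
  w⁻¹ (coxHi i) < w⁻¹ (coxLo i)

theorem isLeftDescent_cox_mul_iff {i j : Fin (n - 1)} {w : Perm (Fin n)} :
    IsLeftDescent j (cox n i * w) ↔ w⁻¹ (cox n i (coxHi j)) < w⁻¹ (cox n i (coxLo j)) := by
  simp [IsLeftDescent]

theorem isLeftDescent_cox_mul_self {i : Fin (n - 1)} {w : Perm (Fin n)} :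
    IsLeftDescent i (cox n i * w) ↔ ¬IsLeftDescent i w := by
  rw [isLeftDescent_cox_mul_iff, cox_apply_coxHi, cox_apply_coxLo, IsLeftDescent, not_lt]
  exact ⟨le_of_lt, fun h => h.lt_of_ne (w⁻¹.injective.ne (coxLo_lt_coxHi i).ne)⟩

theorem invCount_cox_mul_of_isLeftDescent {i : Fin (n - 1)} {w : Perm (Fin n)}
    (h : IsLeftDescent i w) : (cox n i * w).invCount + 1 = w.invCount := by
  refine (card_filter_eq_card_filter_add_one (a := (w⁻¹ (coxHi i), w⁻¹ (coxLo i)))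
    (mem_univ _) ⟨h, by simpa using coxLo_lt_coxHi i⟩ (by simp [(coxLo_lt_coxHi i).not_gt])
    ?_).symm
  rintro ⟨p, q⟩ - hne
  refine and_congr_right fun hpq => (cox_apply_lt_cox_apply_iff ?_ ?_).symm
  · rintro ⟨hq, hp⟩
    exact hne (by simp [← hp, ← hq])
  · rintro ⟨hq, hp⟩
    exact h.not_gt (by simpa [← hp, ← hq] using hpq)

theorem invCount_cox_mul_of_not_isLeftDescent {i : Fin (n - 1)} {w : Perm (Fin n)}
    (h : ¬IsLeftDescent i w) : (cox n i * w).invCount = w.invCount + 1 := by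
  simpa using (invCount_cox_mul_of_isLeftDescent (isLeftDescent_cox_mul_self.mpr h)).symm

theorem invCount_cox_mul_le (i : Fin (n - 1)) (w : Perm (Fin n)) :
    (cox n i * w).invCount ≤ w.invCount + 1 := by
  by_cases h : IsLeftDescent i w
  · have := invCount_cox_mul_of_isLeftDescent h
    omega
  · exact (invCount_cox_mul_of_not_isLeftDescent h).le

@[simp] theorem invCount_one : (1 : Perm (Fin n)).invCount = 0 :=
  card_eq_zero.mpr (filter_eq_empty_iff.mpr fun _ _ h => lt_asymm h.1 h.2)

theorem invCount_wordProd_le (l : List (Fin (n - 1))) : (wordProd n l).invCount ≤ l.length := by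
  induction l with
  | nil => simp only [wordProd_nil, invCount_one, List.length_nil, le_refl]
  | cons i l ih =>
    simpa using (invCount_cox_mul_le i _).trans (Nat.add_le_add_right ih 1)

theorem exists_isLeftDescent_of_lt {w : Perm (Fin n)} {a b : Fin n} (hab : a < b)
    (h : w⁻¹ b < w⁻¹ a) : ∃ i : Fin (n - 1), a ≤ coxLo i ∧ coxHi i ≤ b ∧ IsLeftDescent i w := by
  by_contra! hasc
  -- `w⁻¹` on `[a, b]`, extended constantly beyond `b` so that it is monotone from `a` on.
  let f : ℕ → Fin n := fun k => w⁻¹ ⟨min k b, by omega⟩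
  have step : ∀ k, (a : ℕ) ≤ k → f k ≤ f (k + 1) := by
    intro k hk
    rcases lt_or_ge k b with hkb | hkb
    · have := hasc ⟨k, by omega⟩ (by simpa [Fin.le_def] using hk) (by simpa [Fin.le_def] using hkb)
      simpa [f, IsLeftDescent, coxLo, coxHi, min_eq_left hkb.le,
        Nat.min_eq_left (Nat.succ_le_of_lt hkb)] using this
    · simp [f, min_eq_right hkb, min_eq_right (hkb.trans k.le_succ)]
  have := Nat.rel_of_forall_rel_succ_of_le_of_le (· ≤ ·) step le_rfl hab.le
  simp [f, Nat.min_eq_left (Fin.le_iff_val_le_val.mp hab.le)] at this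
  exact h.not_ge this

theorem eq_one_of_forall_not_isLeftDescent {w : Perm (Fin n)} (h : ∀ i, ¬IsLeftDescent i w) :
    w = 1 := by
  have hmono : StrictMono ⇑w⁻¹ := fun a b hab =>
    (not_lt.mp fun hba => by
      obtain ⟨i, -, -, hi⟩ := exists_isLeftDescent_of_lt hab hba
      exact h i hi).lt_of_ne (w⁻¹.injective.ne hab.ne)
  exact inv_eq_one.mp (Perm.ext fun x => hmono.apply_eq)

end Inversions

section ReducedWords

variable {n : ℕ}

theorem exists_wordProd_eq_length_eq_invCount (w : Perm (Fin n)) :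
    ∃ l : List (Fin (n - 1)), wordProd n l = w ∧ l.length = w.invCount := by
  induction h : w.invCount using Nat.strong_induction_on generalizing w with
  | _ N ih =>
    by_cases hd : ∃ i, IsLeftDescent i w
    · obtain ⟨i, hi⟩ := hd
      have hinv := invCount_cox_mul_of_isLeftDescent hi
      obtain ⟨l, hl, hlen⟩ := ih _ (by omega) (cox n i * w) rfl
      exact ⟨i :: l, by simp [hl], by simp [hlen]; omega⟩
    · obtain rfl := eq_one_of_forall_not_isLeftDescent (not_exists.mp hd)
      exact ⟨[], rfl, by simp [← h]⟩

theorem isReducedWord_iff {w : Perm (Fin n)} {l : List (Fin (n - 1))} :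
    IsReducedWord n w l ↔ wordProd n l = w ∧ l.length = w.invCount := by
  refine ⟨fun ⟨hl, hmin⟩ => ⟨hl, ?_⟩, fun ⟨hl, hlen⟩ => ⟨hl, fun l' hl' => ?_⟩⟩
  · obtain ⟨l₀, hl₀, hlen₀⟩ := exists_wordProd_eq_length_eq_invCount w
    exact le_antisymm (hlen₀ ▸ hmin l₀ hl₀) (hl ▸ invCount_wordProd_le l)
  · exact hlen ▸ hl' ▸ invCount_wordProd_le l'

theorem exists_isReducedWord (w : Perm (Fin n)) : ∃ l, IsReducedWord n w l :=
  (exists_wordProd_eq_length_eq_invCount w).imp fun _ => isReducedWord_iff.mpr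

theorem IsReducedWord.length_eq {w : Perm (Fin n)} {l : List (Fin (n - 1))}
    (h : IsReducedWord n w l) : l.length = w.invCount :=
  (isReducedWord_iff.mp h).2

theorem isReducedWord_cons_iff {w : Perm (Fin n)} {i : Fin (n - 1)} {l : List (Fin (n - 1))} :
    IsReducedWord n w (i :: l) ↔ IsLeftDescent i w ∧ IsReducedWord n (cox n i * w) l := by
  simp only [isReducedWord_iff, wordProd_cons, List.length_cons, cox_mul_eq_iff]
  by_cases hd : IsLeftDescent i w
  · have := invCount_cox_mul_of_isLeftDescent hd
    simp only [hd, true_and]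
    exact and_congr_right fun _ => by omega
  · have := invCount_cox_mul_of_not_isLeftDescent hd
    simp only [hd, false_and, iff_false, not_and]
    intro hl
    have := invCount_wordProd_le l
    rw [hl] at this
    omega

end ReducedWords

section Commutation

variable {n : ℕ} {l l' : List (Fin (n - 1))}

theorem CommMove.symm (h : CommMove n l l') : CommMove n l' l :=
  let ⟨a, b, i, j, hij, hl, hl'⟩ := h
  ⟨a, b, j, i, hij.symm, hl', hl⟩

instance : Std.Symm (CommMove n) :=
  ⟨fun _ _ => CommMove.symm⟩

theorem CommMove.cons (i : Fin (n - 1)) (h : CommMove n l l') : CommMove n (i :: l) (i :: l') :=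
  let ⟨a, b, x, y, hxy, hl, hl'⟩ := h
  ⟨i :: a, b, x, y, hxy, by simp [hl], by simp [hl']⟩

theorem CommMove.perm (h : CommMove n l l') : l.Perm l' := by
  obtain ⟨a, b, i, j, -, rfl, rfl⟩ := h
  exact (List.Perm.swap j i b).append_left a

theorem perm_of_reflTransGen_commMove (h : ReflTransGen (CommMove n) l l') : l.Perm l' := by
  induction h with
  | refl => rfl
  | tail _ hstep ih => exact ih.trans hstep.perm

end Commutation

section Avoidance

variable {n : ℕ} {w : Perm (Fin n)}

theorem isLeftDescent_cox_mul_of_far {i j : Fin (n - 1)}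
    (h : (i : ℕ) + 1 < j ∨ (j : ℕ) + 1 < i) (hj : IsLeftDescent j w) :
    IsLeftDescent j (cox n i * w) := by
  rwa [isLeftDescent_cox_mul_iff, cox_apply_of_ne (by simp; omega) (by simp; omega),
    cox_apply_of_ne (by simp; omega) (by simp; omega)]

theorem isLeftDescent_of_apply_eq {i : Fin (n - 1)} {x y : Fin n} (hx : w x = coxHi i)
    (hy : w y = coxLo i) (hxy : x < y) : IsLeftDescent i w := by
  rw [IsLeftDescent, ← hx, ← hy]
  simpa using hxy

theorem not_avoids321_cox_mul {i : Fin (n - 1)} {x y z : Fin n} (hxy : x < y) (hyz : y < z)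
    (hzy : w z < w y) (hyx : w y < w x) (h₁ : ¬(w z = coxLo i ∧ w y = coxHi i))
    (h₂ : ¬(w y = coxLo i ∧ w x = coxHi i)) : ¬Avoids321 n (cox n i * w) :=
  fun hA => hA ⟨x, y, z, hxy, hyz,
    (cox_apply_lt_cox_apply_iff h₁ fun h => hzy.not_gt (h.1 ▸ h.2 ▸ coxLo_lt_coxHi i)).mpr hzy,
    (cox_apply_lt_cox_apply_iff h₂ fun h => hyx.not_gt (h.1 ▸ h.2 ▸ coxLo_lt_coxHi i)).mpr hyx⟩

theorem Avoids321.cox_mul {i : Fin (n - 1)} (hA : Avoids321 n w) (hi : IsLeftDescent i w) :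
    Avoids321 n (cox n i * w) := by
  rintro ⟨x, y, z, hxy, hyz, hzy, hyx⟩
  have hasc : ¬IsLeftDescent i (cox n i * w) := fun h => isLeftDescent_cox_mul_self.mp h hi
  refine not_avoids321_cox_mul hxy hyz hzy hyx ?_ ?_ (by rwa [cox_mul_cox_mul])
  · exact fun ⟨hz, hy⟩ => hasc (isLeftDescent_of_apply_eq hy hz hyz)
  · exact fun ⟨hy, hx⟩ => hasc (isLeftDescent_of_apply_eq hx hy hxy)

theorem Avoids321.not_isLeftDescent_of_succ {i j : Fin (n - 1)} (hA : Avoids321 n w)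
    (hij : (i : ℕ) + 1 = j) (hi : IsLeftDescent i w) : ¬IsLeftDescent j w := by
  have hlo : coxLo j = coxHi i := Fin.ext (by simp [hij])
  intro hj
  refine hA ⟨w⁻¹ (coxHi j), w⁻¹ (coxLo j), w⁻¹ (coxLo i), hj, hlo ▸ hi, ?_, ?_⟩ <;>
    simp only [Perm.coe_inv, apply_symm_apply, Fin.lt_def, val_coxLo, val_coxHi] <;> omega

theorem Avoids321.far_of_isLeftDescent {i j : Fin (n - 1)} (hA : Avoids321 n w)
    (hi : IsLeftDescent i w) (hj : IsLeftDescent j w) (hij : i ≠ j) :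
    (i : ℕ) + 1 < j ∨ (j : ℕ) + 1 < i := by
  have := Fin.val_ne_of_ne hij
  by_contra! h
  rcases Nat.lt_or_gt_of_ne this with h' | h'
  · exact hA.not_isLeftDescent_of_succ (by omega) hi hj
  · exact hA.not_isLeftDescent_of_succ (by omega) hj hi

theorem Avoids321.fullyCommutative (hA : Avoids321 n w) : FullyCommutative n w := by
  induction h : w.invCount using Nat.strong_induction_on generalizing w with
  | _ N ih =>
    rintro (_ | ⟨i, t⟩) (_ | ⟨j, t'⟩) hl hl'
    · rfl
    · simpa using hl.length_eq.trans hl'.length_eq.symm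
    · simpa using hl.length_eq.trans hl'.length_eq.symm
    obtain ⟨hi, ht⟩ := isReducedWord_cons_iff.mp hl
    obtain ⟨hj, ht'⟩ := isReducedWord_cons_iff.mp hl'
    have ihi := ih _ (by have := invCount_cox_mul_of_isLeftDescent hi; omega) (hA.cox_mul hi) rfl
    have ihj := ih _ (by have := invCount_cox_mul_of_isLeftDescent hj; omega) (hA.cox_mul hj) rfl
    have lift (k : Fin (n - 1)) := ReflTransGen.lift (List.cons k) fun _ _ => CommMove.cons k
    rcases eq_or_ne i j with rfl | hij
    · exact lift i _ _ (ihi t t' ht ht')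
    have hfar := hA.far_of_isLeftDescent hi hj hij
    obtain ⟨m, hm⟩ := exists_isReducedWord (cox n j * (cox n i * w))
    have hjm : IsReducedWord n (cox n i * w) (j :: m) :=
      isReducedWord_cons_iff.mpr ⟨isLeftDescent_cox_mul_of_far hfar hj, hm⟩
    have him : IsReducedWord n (cox n j * w) (i :: m) :=
      isReducedWord_cons_iff.mpr ⟨isLeftDescent_cox_mul_of_far hfar.symm hi,
        by rwa [← mul_assoc, cox_mul_comm hfar, mul_assoc]⟩
    calc ReflTransGen (CommMove n) (i :: t) (i :: j :: m) := lift i _ _ (ihi t _ ht hjm)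
      ReflTransGen (CommMove n) _ (j :: i :: m) := .single ⟨[], m, i, j, hfar, rfl, rfl⟩
      ReflTransGen (CommMove n) _ (j :: t') := symm (lift j _ _ (ihj t' _ ht' him))

end Avoidance

section Converse

variable {n : ℕ} {w : Perm (Fin n)}

theorem exists_isLeftDescent_not_avoids321_or_adjacent (h : ¬Avoids321 n w) :
    (∃ v, IsLeftDescent v w ∧ ¬Avoids321 n (cox n v * w)) ∨
      ∃ d d' : Fin (n - 1), (d : ℕ) + 1 = d' ∧ IsLeftDescent d w ∧ IsLeftDescent d' w := by
  obtain ⟨x, y, z, hxy, hyz, hzy, hyx⟩ := not_not.mp h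
  obtain ⟨v, hv₁, -, hv⟩ := exists_isLeftDescent_of_lt (w := w) hyx (by simpa using hxy)
  obtain ⟨v', -, hv'₂, hv'⟩ := exists_isLeftDescent_of_lt (w := w) hzy (by simpa using hyz)
  refine or_iff_not_imp_left.mpr fun hno => ⟨v', v, ?_, hv', hv⟩
  push Not at hno
  have e₁ : w y = coxLo v := by
    by_contra hne
    exact not_avoids321_cox_mul hxy hyz hzy hyx
      (fun h => (h.2 ▸ hv₁).not_gt (coxLo_lt_coxHi v)) (fun h => hne h.1) (hno v hv)
  have e₂ : w y = coxHi v' := by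
    by_contra hne
    exact not_avoids321_cox_mul hxy hyz hzy hyx
      (fun h => hne h.2) (fun h => hyx.not_ge (h.2 ▸ hv'₂)) (hno v' hv')
  simpa using congrArg Fin.val (e₂.symm.trans e₁)

theorem exists_isReducedWord_not_perm_of_adjacent {d d' : Fin (n - 1)} (h : (d : ℕ) + 1 = d')
    (hd : IsLeftDescent d w) (hd' : IsLeftDescent d' w) :
    ∃ l l', IsReducedWord n w l ∧ IsReducedWord n w l' ∧ ¬l.Perm l' := by
  have hlo : coxLo d' = coxHi d := Fin.ext (by simp [h])
  have hd'' : w⁻¹ (coxHi d') < w⁻¹ (coxHi d) := by rwa [IsLeftDescent, hlo] at hd'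
  have hd'₁ : IsLeftDescent d' (cox n d * w) := by
    rw [isLeftDescent_cox_mul_iff, hlo, cox_apply_coxHi,
      cox_apply_of_ne (by simp only [val_coxHi]; omega) (by simp only [val_coxHi]; omega)]
    exact hd''.trans hd
  have hd₂ : IsLeftDescent d (cox n d' * (cox n d * w)) := by
    simp only [IsLeftDescent, mul_inv_rev, cox_inv, Perm.mul_apply]
    rw [← hlo, cox_apply_coxLo,
      cox_apply_of_ne (i := d) (x := coxHi d') (by simp only [val_coxHi]; omega)
        (by simp only [val_coxHi]; omega),
      cox_apply_of_ne (i := d') (x := coxLo d) (by simp only [val_coxLo]; omega)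
        (by simp only [val_coxLo]; omega), cox_apply_coxLo]
    exact hd''
  obtain ⟨m, hm⟩ := exists_isReducedWord (cox n d * (cox n d' * (cox n d * w)))
  have hl : IsReducedWord n w (d :: d' :: d :: m) := isReducedWord_cons_iff.mpr
    ⟨hd, isReducedWord_cons_iff.mpr ⟨hd'₁, isReducedWord_cons_iff.mpr ⟨hd₂, hm⟩⟩⟩
  have hprod : wordProd n (d' :: d :: d' :: m) = wordProd n (d :: d' :: d :: m) := by
    simp only [wordProd_cons, ← mul_assoc, cox_braid h]
  refine ⟨_, _, hl, ⟨hprod.trans hl.1, hl.2⟩, fun hp => ?_⟩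
  have hdd : d ≠ d' := fun e => by simp [e] at h
  simpa [List.count_cons, hdd, hdd.symm] using hp.count_eq d

theorem exists_isReducedWord_not_perm (h : ¬Avoids321 n w) :
    ∃ l l', IsReducedWord n w l ∧ IsReducedWord n w l' ∧ ¬l.Perm l' := by
  induction hN : w.invCount using Nat.strong_induction_on generalizing w with
  | _ N ih =>
    rcases exists_isLeftDescent_not_avoids321_or_adjacent h with
      ⟨v, hv, hv'⟩ | ⟨d, d', hdd, hd, hd'⟩
    · have := invCount_cox_mul_of_isLeftDescent hv
      obtain ⟨l, l', hl, hl', hp⟩ := ih _ (by omega) hv' rfl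
      exact ⟨v :: l, v :: l', isReducedWord_cons_iff.mpr ⟨hv, hl⟩,
        isReducedWord_cons_iff.mpr ⟨hv, hl'⟩, (List.perm_cons v).not.mpr hp⟩
    · exact exists_isReducedWord_not_perm_of_adjacent hdd hd hd'

theorem FullyCommutative.avoids321 (h : FullyCommutative n w) : Avoids321 n w := by
  by_contra hA
  obtain ⟨l, l', hl, hl', hp⟩ := exists_isReducedWord_not_perm hA
  exact hp (perm_of_reflTransGen_commMove (h l l' hl hl'))

end Converse

/-- A permutation is 321-avoiding iff it is fully commutative. -/
theorem stmt15 (n : ℕ) (w : Equiv.Perm (Fin n)) :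
    Avoids321 n w ↔ FullyCommutative n w :=
  ⟨Avoids321.fullyCommutative, FullyCommutative.avoids321⟩
end

section
/- With u the endomorphism of V ⊗ V as above, u is idempotent (u² = u), and the operators u_i = 1^{⊗(i-1)} ⊗ u ⊗ 1^{⊗(n-i-1)} on V^{⊗n} satisfy (v+v⁻¹)² u_i u_j u_i = u_i for |i-j| = 1 and u_i u_j = u_j u_i for |i-j| > 1, i.e. they define a representation of the Jones algebra A_n((v+v⁻¹)²). -/
/-- The matrix of the projection `u` of `V ⊗ V` onto the one-dimensional summand,
in the basis `x₀⊗x₀, x₀⊗x₁, x₁⊗x₀, x₁⊗x₁` (indexed by `Fin 2 × Fin 2`). -/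
def Umat (k : Type*) [Field k] (v : k) : Matrix (Fin 2 × Fin 2) (Fin 2 × Fin 2) k :=
  (v + v⁻¹)⁻¹ • Matrix.of fun p q =>
    if p = ((0 : Fin 2), (1 : Fin 2)) then
      (if q = ((0 : Fin 2), (1 : Fin 2)) then v⁻¹
       else if q = ((1 : Fin 2), (0 : Fin 2)) then -1 else 0)
    else if p = ((1 : Fin 2), (0 : Fin 2)) then
      (if q = ((0 : Fin 2), (1 : Fin 2)) then -1
       else if q = ((1 : Fin 2), (0 : Fin 2)) then v else 0)
    else 0

/-- The matrix of `u_i = 1^{⊗(i-1)} ⊗ u ⊗ 1^{⊗(n-i-1)})` on `V^{⊗n}`,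
where `V^{⊗n}` has basis indexed by `Fin n → Fin 2` and `u` acts in tensor
positions `i, i+1`. -/
def Upos (k : Type*) [Field k] (v : k) (n : ℕ) (i : ℕ) (h : i + 1 < n) :
    Matrix (Fin n → Fin 2) (Fin n → Fin 2) k :=
  Matrix.of fun x y =>
    if ∀ j : Fin n, (j : ℕ) ≠ i → (j : ℕ) ≠ i + 1 → x j = y j then
      Umat k v (x ⟨i, by omega⟩, x ⟨i + 1, h⟩) (y ⟨i, by omega⟩, y ⟨i + 1, h⟩)
    else 0

/-!
Write `a = x₀⊗x₁ - v x₁⊗x₀` and `b = v⁻¹ x₀⊗x₁ - x₁⊗x₀`. Then `u = (v+v⁻¹)⁻¹ a bᵀ` with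
`bᵀa = v + v⁻¹`, so `u` is idempotent. Reading `a` and `b` as the 2×2 matrices `A` (cup) and
`B` (cap), one has `AB = BA = -1`; this zig-zag identity gives `u₁u₂u₁ = (v+v⁻¹)⁻² u₁` and
`u₂u₁u₂ = (v+v⁻¹)⁻² u₂` on `V⊗V⊗V`. Writing `V^{⊗n}` as the tensor product of the two or three
factors a relation involves with the remaining ones turns each `u_i` into a Kronecker product
with an identity, so the local relations transport; operators on disjoint pairs of factors
commute for the same reason.
-/

open Matrix Kronecker

theorem isIdempotentElem_inv_dotProduct_smul_vecMulVec {n K : Type*} [Fintype n] [Field K]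
    (a b : n → K) (h : b ⬝ᵥ a ≠ 0) : IsIdempotentElem ((b ⬝ᵥ a)⁻¹ • vecMulVec a b) := by
  rw [IsIdempotentElem, smul_mul_smul_comm, vecMulVec_mul_vecMulVec, vecMulVec_smul, smul_smul,
    mul_assoc, inv_mul_cancel₀ h, mul_one]

theorem sq_smul_inv_smul_mul_inv_smul_mul_inv_smul {K A : Type*} [Field K] [Ring A] [Algebra K A]
    {d : K} (hd : d ≠ 0) {X Y : A} (h : X * Y * X = X) :
    d ^ 2 • ((d⁻¹ • X) * (d⁻¹ • Y) * (d⁻¹ • X)) = d⁻¹ • X := by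
  rw [smul_mul_smul_comm, smul_mul_smul_comm, h, smul_smul]
  congr 1
  field_simp

section ThreeSites

variable {α R : Type*} [Fintype α] [DecidableEq α] [CommRing R]

def cupCap (A B : Matrix α α R) : Matrix (α × α) (α × α) R :=
  vecMulVec (fun p => A p.1 p.2) (fun p => B p.1 p.2)

def onFirstPair (M : Matrix (α × α) (α × α) R) : Matrix ((α × α) × α) ((α × α) × α) R :=
  M ⊗ₖ 1

def onSecondPair (M : Matrix (α × α) (α × α) R) : Matrix ((α × α) × α) ((α × α) × α) R :=
  (1 ⊗ₖ M).submatrix (Equiv.prodAssoc α α α) (Equiv.prodAssoc α α α)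

variable {A B : Matrix α α R} {c₁ c₂ : R}

theorem onFirstPair_mul_onSecondPair_mul_onFirstPair (hAB : A * B = c₂ • 1)
    (hBA : B * A = c₁ • 1) :
    onFirstPair (cupCap A B) * onSecondPair (cupCap A B) * onFirstPair (cupCap A B) =
      (c₁ * c₂) • onFirstPair (cupCap A B) := by
  ext ⟨⟨x₀, x₁⟩, x₂⟩ ⟨⟨y₀, y₁⟩, y₂⟩
  simp only [mul_apply, Fintype.sum_prod_type]
  simp only [onFirstPair, onSecondPair, cupCap, kroneckerMap_apply, submatrix_apply,
    Equiv.prodAssoc_apply, vecMulVec_apply, one_apply, mul_ite, ite_mul, mul_one, one_mul,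
    mul_zero, zero_mul, Finset.sum_ite_irrel, Finset.sum_ite_eq, Finset.sum_ite_eq',
    Finset.mem_univ, ↓reduceIte, Finset.sum_const_zero, Finset.sum_mul, Matrix.smul_apply, smul_eq_mul]
  calc _ = A x₀ x₁ * B y₀ y₁ * ∑ r, (B * A) r x₂ * (A * B) r y₂ := by
        simp only [mul_apply, Finset.mul_sum, Finset.sum_mul]
        exact Finset.sum_congr rfl fun _ _ => Finset.sum_congr rfl fun _ _ =>
          Finset.sum_congr rfl fun _ _ => by ring
    _ = _ := by
        simp only [hAB, hBA, Matrix.smul_apply, one_apply, smul_eq_mul, mul_ite, ite_mul, mul_one,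
          mul_zero, zero_mul, Finset.sum_ite_eq', Finset.mem_univ, ↓reduceIte]
        split_ifs <;> simp_all
        ring

theorem onSecondPair_mul_onFirstPair_mul_onSecondPair (hAB : A * B = c₂ • 1)
    (hBA : B * A = c₁ • 1) :
    onSecondPair (cupCap A B) * onFirstPair (cupCap A B) * onSecondPair (cupCap A B) =
      (c₁ * c₂) • onSecondPair (cupCap A B) := by
  ext ⟨⟨x₀, x₁⟩, x₂⟩ ⟨⟨y₀, y₁⟩, y₂⟩
  simp only [mul_apply, Fintype.sum_prod_type]
  simp only [onFirstPair, onSecondPair, cupCap, kroneckerMap_apply, submatrix_apply,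
    Equiv.prodAssoc_apply, vecMulVec_apply, one_apply, mul_ite, ite_mul, mul_one, one_mul,
    mul_zero, zero_mul, Finset.sum_ite_irrel, Finset.sum_ite_eq, Finset.sum_ite_eq',
    Finset.mem_univ, ↓reduceIte, Finset.sum_const_zero, Finset.sum_mul, Matrix.smul_apply, smul_eq_mul]
  calc _ = A x₁ x₂ * B y₁ y₂ * ∑ r, (A * B) x₀ r * (B * A) y₀ r := by
        simp only [mul_apply, Finset.mul_sum, Finset.sum_mul]
        rw [Finset.sum_comm]
        exact Finset.sum_congr rfl fun _ _ => Finset.sum_congr rfl fun _ _ =>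
          Finset.sum_congr rfl fun _ _ => by ring
    _ = _ := by
        simp only [hAB, hBA, Matrix.smul_apply, one_apply, smul_eq_mul, mul_ite, ite_mul, mul_one,
          mul_zero, zero_mul, Finset.sum_ite_eq, Finset.mem_univ, ↓reduceIte]
        split_ifs <;> ring

end ThreeSites

section Sites

variable {ι α R : Type*} [DecidableEq ι] [DecidableEq α] [CommRing R]

def onPair [Fintype ι] (i j : ι) (M : Matrix (α × α) (α × α) R) : Matrix (ι → α) (ι → α) R :=
  of fun x y => if ∀ l, l ≠ i → l ≠ j → x l = y l then M (x i, x j) (y i, y j) else 0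

def pairSplit {i j : ι} (hij : i ≠ j) : (ι → α) ≃ (α × α) × ({l // l ≠ i ∧ l ≠ j} → α) where
  toFun x := ((x i, x j), fun l => x l)
  invFun p l := if hi : l = i then p.1.1 else if hj : l = j then p.1.2 else p.2 ⟨l, hi, hj⟩
  left_inv x := by grind
  right_inv p := by ext <;> grind

def tripleSplit {i j l : ι} (hij : i ≠ j) (hil : i ≠ l) (hjl : j ≠ l) :
    (ι → α) ≃ ((α × α) × α) × ({m // m ≠ i ∧ m ≠ j ∧ m ≠ l} → α) where
  toFun x := (((x i, x j), x l), fun m => x m)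
  invFun p m := if hi : m = i then p.1.1.1 else if hj : m = j then p.1.1.2 else
    if hl : m = l then p.1.2 else p.2 ⟨m, hi, hj, hl⟩
  left_inv x := by grind
  right_inv p := by ext <;> grind

variable [Fintype ι]

theorem onPair_smul (i j : ι) (c : R) (M : Matrix (α × α) (α × α) R) :
    onPair i j (c • M) = c • onPair i j M := by
  ext x y
  simp [onPair]

theorem onPair_eq_submatrix {i j : ι} (hij : i ≠ j) (M : Matrix (α × α) (α × α) R) :
    onPair i j M = (M ⊗ₖ (1 : Matrix _ _ R)).submatrix (pairSplit hij) (pairSplit hij) := by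
  ext x y
  simp [onPair, pairSplit, one_apply, funext_iff]

theorem onPair_eq_one_kronecker_submatrix {i j k l : ι} (hij : i ≠ j) (hk : k ≠ i ∧ k ≠ j)
    (hl : l ≠ i ∧ l ≠ j) (N : Matrix (α × α) (α × α) R) :
    onPair k l N = ((1 : Matrix (α × α) (α × α) R) ⊗ₖ onPair ⟨k, hk⟩ ⟨l, hl⟩ N).submatrix
      (pairSplit hij) (pairSplit hij) := by
  ext x y
  simp only [onPair, pairSplit, submatrix_apply, Equiv.coe_fn_mk, kroneckerMap_apply, of_apply,
    one_apply, Prod.mk.injEq, Subtype.forall, ite_mul, one_mul, zero_mul]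
  rw [← ite_and]
  congr 1
  simp only [ne_eq, Subtype.mk.injEq]
  grind

theorem onPair_eq_tripleSplit_left {i j l : ι} (hij : i ≠ j) (hil : i ≠ l) (hjl : j ≠ l)
    (M : Matrix (α × α) (α × α) R) :
    onPair i j M = (onFirstPair M ⊗ₖ (1 : Matrix _ _ R)).submatrix
      (tripleSplit hij hil hjl) (tripleSplit hij hil hjl) := by
  ext x y
  simp only [onPair, onFirstPair, tripleSplit, Equiv.coe_fn_mk, submatrix_apply, of_apply,
    kroneckerMap_apply, one_apply, mul_ite, mul_one, mul_zero, funext_iff, Subtype.forall, and_imp]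
  rw [← ite_and]
  congr 1
  grind

theorem onPair_eq_tripleSplit_right {i j l : ι} (hij : i ≠ j) (hil : i ≠ l) (hjl : j ≠ l)
    (M : Matrix (α × α) (α × α) R) :
    onPair j l M = (onSecondPair M ⊗ₖ (1 : Matrix _ _ R)).submatrix
      (tripleSplit hij hil hjl) (tripleSplit hij hil hjl) := by
  ext x y
  simp only [onPair, onSecondPair, tripleSplit, Equiv.coe_fn_mk, submatrix_apply, of_apply,
    kroneckerMap_apply, Equiv.prodAssoc_apply, one_apply, ite_mul, one_mul, zero_mul, mul_ite,
    mul_one, mul_zero, funext_iff, Subtype.forall, and_imp]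
  rw [← ite_and]
  congr 1
  grind

variable [Fintype α]

theorem onPair_mul {i j : ι} (hij : i ≠ j) (M N : Matrix (α × α) (α × α) R) :
    onPair i j (M * N) = onPair i j M * onPair i j N := by
  rw [onPair_eq_submatrix hij, onPair_eq_submatrix hij, onPair_eq_submatrix hij,
    submatrix_mul_equiv, ← mul_kronecker_mul, one_mul]

theorem onPair_commute {i j k l : ι} (hij : i ≠ j) (hk : k ≠ i ∧ k ≠ j) (hl : l ≠ i ∧ l ≠ j)
    (M N : Matrix (α × α) (α × α) R) :
    Commute (onPair i j M) (onPair k l N) := by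
  rw [Commute, SemiconjBy, onPair_eq_submatrix hij, onPair_eq_one_kronecker_submatrix hij hk hl,
    submatrix_mul_equiv, submatrix_mul_equiv, ← mul_kronecker_mul, ← mul_kronecker_mul,
    one_mul, mul_one, one_mul, mul_one]

theorem onPair_mul_onPair_mul_onPair_left {i j l : ι} (hij : i ≠ j) (hil : i ≠ l) (hjl : j ≠ l)
    {A B : Matrix α α R} {c₁ c₂ : R} (hAB : A * B = c₂ • 1) (hBA : B * A = c₁ • 1) :
    onPair i j (cupCap A B) * onPair j l (cupCap A B) * onPair i j (cupCap A B) =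
      (c₁ * c₂) • onPair i j (cupCap A B) := by
  simp only [onPair_eq_tripleSplit_left hij hil hjl, onPair_eq_tripleSplit_right hij hil hjl,
    submatrix_mul_equiv, ← mul_kronecker_mul, one_mul,
    onFirstPair_mul_onSecondPair_mul_onFirstPair hAB hBA, smul_kronecker, submatrix_smul]
  rfl

theorem onPair_mul_onPair_mul_onPair_right {i j l : ι} (hij : i ≠ j) (hil : i ≠ l) (hjl : j ≠ l)
    {A B : Matrix α α R} {c₁ c₂ : R} (hAB : A * B = c₂ • 1) (hBA : B * A = c₁ • 1) :
    onPair j l (cupCap A B) * onPair i j (cupCap A B) * onPair j l (cupCap A B) =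
      (c₁ * c₂) • onPair j l (cupCap A B) := by
  simp only [onPair_eq_tripleSplit_left hij hil hjl, onPair_eq_tripleSplit_right hij hil hjl,
    submatrix_mul_equiv, ← mul_kronecker_mul, one_mul,
    onSecondPair_mul_onFirstPair_mul_onSecondPair hAB hBA, smul_kronecker, submatrix_smul]
  rfl

end Sites

section JonesRepresentation

variable {k : Type*} [Field k] {v : k}

theorem ne_zero_of_add_inv_ne_zero (hδ : v + v⁻¹ ≠ 0) : v ≠ 0 := by
  rintro rfl
  simp at hδ

def cupMatrix (v : k) : Matrix (Fin 2) (Fin 2) k := !![0, 1; -v, 0]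

def capMatrix (v : k) : Matrix (Fin 2) (Fin 2) k := !![0, v⁻¹; -1, 0]

theorem cupMatrix_mul_capMatrix (hv : v ≠ 0) : cupMatrix v * capMatrix v = (-1 : k) • 1 := by
  simp [cupMatrix, capMatrix, one_fin_two, hv]

theorem capMatrix_mul_cupMatrix (hv : v ≠ 0) : capMatrix v * cupMatrix v = (-1 : k) • 1 := by
  simp [cupMatrix, capMatrix, one_fin_two, hv]

theorem capMatrix_dotProduct_cupMatrix :
    (fun p : Fin 2 × Fin 2 => capMatrix v p.1 p.2) ⬝ᵥ (fun p => cupMatrix v p.1 p.2) =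
      v + v⁻¹ := by
  simp [dotProduct, Fintype.sum_prod_type, cupMatrix, capMatrix, add_comm]

theorem Umat_eq_smul_cupCap (hv : v ≠ 0) :
    Umat k v = (v + v⁻¹)⁻¹ • cupCap (cupMatrix v) (capMatrix v) := by
  ext ⟨a, b⟩ ⟨c, d⟩
  fin_cases a <;> fin_cases b <;> fin_cases c <;> fin_cases d <;>
    simp [Umat, cupCap, cupMatrix, capMatrix, vecMulVec_apply, hv]

theorem Umat_mul_self (hδ : v + v⁻¹ ≠ 0) : Umat k v * Umat k v = Umat k v := by
  rw [Umat_eq_smul_cupCap (ne_zero_of_add_inv_ne_zero hδ), cupCap,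
    ← capMatrix_dotProduct_cupMatrix]
  exact isIdempotentElem_inv_dotProduct_smul_vecMulVec _ _
    (by rwa [capMatrix_dotProduct_cupMatrix])

theorem Upos_eq_onPair (n i : ℕ) (h : i + 1 < n) :
    Upos k v n i h = onPair ⟨i, by omega⟩ ⟨i + 1, h⟩ (Umat k v) := by
  ext x y
  simp [Upos, onPair, Fin.ext_iff]

theorem Upos_mul_self (hδ : v + v⁻¹ ≠ 0) {n i : ℕ} (h : i + 1 < n) :
    Upos k v n i h * Upos k v n i h = Upos k v n i h := by
  rw [Upos_eq_onPair, ← onPair_mul (by grind), Umat_mul_self hδ]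

theorem Upos_mul_Upos_succ_mul_Upos (hδ : v + v⁻¹ ≠ 0) {n i : ℕ} (h₁ : i + 1 < n)
    (h₂ : i + 1 + 1 < n) :
    (v + v⁻¹) ^ 2 • (Upos k v n i h₁ * Upos k v n (i + 1) h₂ * Upos k v n i h₁) =
      Upos k v n i h₁ := by
  have hv := ne_zero_of_add_inv_ne_zero hδ
  simp only [Upos_eq_onPair, Umat_eq_smul_cupCap hv, onPair_smul]
  apply sq_smul_inv_smul_mul_inv_smul_mul_inv_smul hδ
  rw [onPair_mul_onPair_mul_onPair_left (by grind) (by grind) (by grind)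
    (cupMatrix_mul_capMatrix hv) (capMatrix_mul_cupMatrix hv)]
  simp

theorem Upos_succ_mul_Upos_mul_Upos_succ (hδ : v + v⁻¹ ≠ 0) {n i : ℕ} (h₁ : i + 1 < n)
    (h₂ : i + 1 + 1 < n) :
    (v + v⁻¹) ^ 2 • (Upos k v n (i + 1) h₂ * Upos k v n i h₁ * Upos k v n (i + 1) h₂) =
      Upos k v n (i + 1) h₂ := by
  have hv := ne_zero_of_add_inv_ne_zero hδ
  simp only [Upos_eq_onPair, Umat_eq_smul_cupCap hv, onPair_smul]
  apply sq_smul_inv_smul_mul_inv_smul_mul_inv_smul hδ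
  rw [onPair_mul_onPair_mul_onPair_right (by grind) (by grind) (by grind)
    (cupMatrix_mul_capMatrix hv) (capMatrix_mul_cupMatrix hv)]
  simp

theorem Upos_commute {n i j : ℕ} (hi : i + 1 < n) (hj : j + 1 < n)
    (hij : i + 1 < j ∨ j + 1 < i) : Commute (Upos k v n i hi) (Upos k v n j hj) := by
  rw [Upos_eq_onPair, Upos_eq_onPair]
  exact onPair_commute (by grind) (by grind) (by grind) _ _

end JonesRepresentation

theorem stmt19_general (k : Type*) [Field k] (v : k) (hδ : v + v⁻¹ ≠ 0) (n : ℕ) :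
    (Umat k v * Umat k v = Umat k v) ∧
    (∀ (i : ℕ) (h : i + 1 < n), Upos k v n i h * Upos k v n i h = Upos k v n i h) ∧
    (∀ (i j : ℕ) (hi : i + 1 < n) (hj : j + 1 < n), (i + 1 = j ∨ j + 1 = i) →
      ((v + v⁻¹) ^ 2) • (Upos k v n i hi * Upos k v n j hj * Upos k v n i hi) =
        Upos k v n i hi) ∧
    (∀ (i j : ℕ) (hi : i + 1 < n) (hj : j + 1 < n), (i + 1 < j ∨ j + 1 < i) →
      Upos k v n i hi * Upos k v n j hj = Upos k v n j hj * Upos k v n i hi) := by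
  refine ⟨Umat_mul_self hδ, fun i h => Upos_mul_self hδ h, ?_,
    fun i j hi hj hij => Upos_commute hi hj hij⟩
  rintro i j hi hj (rfl | rfl)
  · exact Upos_mul_Upos_succ_mul_Upos hδ hi hj
  · exact Upos_succ_mul_Upos_mul_Upos_succ hδ hj hi

/-- `u` is idempotent, and the operators `u_i = 1^{⊗(i-1)} ⊗ u ⊗ 1^{⊗(n-i-1)}`
satisfy the Jones algebra relations for `β = (v+v⁻¹)²`. -/
theorem stmt19 (k : Type*) [Field k] (v : k) (hv : v ≠ 0) (hδ : v + v⁻¹ ≠ 0) (n : ℕ) :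
    (Umat k v * Umat k v = Umat k v) ∧
    (∀ (i : ℕ) (h : i + 1 < n), Upos k v n i h * Upos k v n i h = Upos k v n i h) ∧
    (∀ (i j : ℕ) (hi : i + 1 < n) (hj : j + 1 < n), (i + 1 = j ∨ j + 1 = i) →
      ((v + v⁻¹) ^ 2) • (Upos k v n i hi * Upos k v n j hj * Upos k v n i hi) =
        Upos k v n i hi) ∧
    (∀ (i j : ℕ) (hi : i + 1 < n) (hj : j + 1 < n), (i + 1 < j ∨ j + 1 < i) →
      Upos k v n i hi * Upos k v n j hj = Upos k v n j hj * Upos k v n i hi) :=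
  stmt19_general k v hδ n
end
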